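/- arXiv:2003.08334 — 4 statements merged into one kernel-verified Lean document; each statement's English description precedes it below -/
import Mathlib

section
/- Suppose ℏ ≥ 0. Then the unique minimizer v* over ℝ of φ(v) = a·|v| + b·|v − ℏ| + (1/2)·(v − u)² is given by the following piecewise formula: v* = u − a − b if ℏ + a + b < u; v* = ℏ if ℏ + a − b ≤ u ≤ ℏ + a + b; v* = u − a + b if a − b < u < ℏ + a − b; v* = 0 if −(a + b) ≤ u ≤ a − b; and v* = u + a + b if u < −(a + b). -/
/-!
Each candidate `v` is certified by optimality: if `u - v` is a subgradient of
`g = a·|·| + b·|· - ℏ|` at `v`, then expanding the square gives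
`φ w ≥ φ v + (w - v)² / 2`, so `v` is the unique minimizer. In each of the five regimes
the subgradient splits as `s + t` with `s ∈ ∂(a·|·|)(v)` and `t ∈ ∂(b·|· - ℏ|)(v)`,
read off from the signs of `v` and `v - ℏ`.
-/

/-- `v` is the unique minimizer of `φ` over `ℝ`. -/
def IsUniqueMinimizer (φ : ℝ → ℝ) (v : ℝ) : Prop :=
  (∀ w : ℝ, φ v ≤ φ w) ∧ ∀ w : ℝ, (∀ z : ℝ, φ w ≤ φ z) → w = v

lemma isUniqueMinimizer_of_lt {φ : ℝ → ℝ} {v : ℝ} (h : ∀ w, w ≠ v → φ v < φ w) :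
    IsUniqueMinimizer φ v := by
  refine ⟨fun w => ?_, fun w hw => ?_⟩
  · rcases eq_or_ne w v with rfl | hne
    · exact le_rfl
    · exact (h w hne).le
  · by_contra hne
    exact (h w hne).not_ge (hw v)

def HasSubgradientAt (g : ℝ → ℝ) (s v : ℝ) : Prop :=
  ∀ w, g v + s * (w - v) ≤ g w

namespace HasSubgradientAt

variable {f g : ℝ → ℝ} {s t v : ℝ}

lemma add (hf : HasSubgradientAt f s v) (hg : HasSubgradientAt g t v) :
    HasSubgradientAt (fun w => f w + g w) (s + t) v := fun w => by
  linarith [hf w, hg w]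

lemma isUniqueMinimizer_add_sq {u : ℝ} (hg : HasSubgradientAt g (u - v) v) :
    IsUniqueMinimizer (fun w => g w + 1 / 2 * (w - u) ^ 2) v := by
  refine isUniqueMinimizer_of_lt fun w hne => ?_
  have hsq : 0 < (w - v) ^ 2 := sq_pos_of_ne_zero (sub_ne_zero.mpr hne)
  have expand : (w - u) ^ 2 = (v - u) ^ 2 - 2 * (u - v) * (w - v) + (w - v) ^ 2 := by ring
  simp only [expand]
  linarith [hg w]

end HasSubgradientAt

lemma hasSubgradientAt_const_mul_abs_sub {c p s v : ℝ} (hs : |s| ≤ c)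
    (hsv : s * (v - p) = c * |v - p|) : HasSubgradientAt (fun w => c * |w - p|) s v := fun w => by
  have hbound : s * (w - p) ≤ c * |w - p| :=
    calc s * (w - p) ≤ |s| * |w - p| := by rw [← abs_mul]; exact le_abs_self _
      _ ≤ c * |w - p| := mul_le_mul_of_nonneg_right hs (abs_nonneg _)
  have split : s * (w - v) = s * (w - p) - s * (v - p) := by ring
  simp only [split]
  linarith

lemma isUniqueMinimizer_abs_add_abs_sub_add_sq {a b p u v : ℝ} (s t : ℝ) (hs : |s| ≤ a)
    (hsv : s * v = a * |v|) (ht : |t| ≤ b) (htv : t * (v - p) = b * |v - p|)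
    (hst : s + t = u - v) :
    IsUniqueMinimizer (fun w => a * |w| + b * |w - p| + 1 / 2 * (w - u) ^ 2) v := by
  have hs' : HasSubgradientAt (fun w => a * |w|) s v := by
    simpa using hasSubgradientAt_const_mul_abs_sub (p := 0) hs (by simpa using hsv)
  have hg : HasSubgradientAt (fun w => a * |w| + b * |w - p|) (u - v) v :=
    hst ▸ hs'.add (hasSubgradientAt_const_mul_abs_sub ht htv)
  exact hg.isUniqueMinimizer_add_sq

/-- Proposition 1 of the paper, case `hbar ≥ 0`: the piecewise formula for the
unique minimizer of `φ(v) = a·|v| + b·|v − hbar| + (1/2)·(v − u)²`, i.e. for the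
proximal operator of the reweighted ℓ1-ℓ1 regularizer. -/
theorem prox_reweighted_l1_l1_formula_of_hbar_nonneg
    (a b hbar u : ℝ) (ha : 0 ≤ a) (hb : 0 ≤ b) (hhbar : 0 ≤ hbar)
    (φ : ℝ → ℝ) (hφ : ∀ v, φ v = a * |v| + b * |v - hbar| + (1 / 2) * (v - u) ^ 2) :
    (hbar + a + b < u → IsUniqueMinimizer φ (u - a - b)) ∧
    (hbar + a - b ≤ u → u ≤ hbar + a + b → IsUniqueMinimizer φ hbar) ∧
    (a - b < u → u < hbar + a - b → IsUniqueMinimizer φ (u - a + b)) ∧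
    (-(a + b) ≤ u → u ≤ a - b → IsUniqueMinimizer φ 0) ∧
    (u < -(a + b) → IsUniqueMinimizer φ (u + a + b)) := by
  obtain rfl : φ = _ := funext hφ
  have abs_a : |a| ≤ a := (abs_of_nonneg ha).le
  have abs_b : |b| ≤ b := (abs_of_nonneg hb).le
  have abs_neg_a : |-a| ≤ a := by rwa [abs_neg]
  have abs_neg_b : |-b| ≤ b := by rwa [abs_neg]
  refine ⟨fun h => ?_, fun h₁ h₂ => ?_, fun h₁ h₂ => ?_, fun h₁ h₂ => ?_, fun h => ?_⟩
  · refine isUniqueMinimizer_abs_add_abs_sub_add_sq a b abs_a ?_ abs_b ?_ (by ring)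
    · rw [abs_of_nonneg (by linarith)]
    · rw [abs_of_nonneg (by linarith)]
  · refine isUniqueMinimizer_abs_add_abs_sub_add_sq a (u - hbar - a) abs_a ?_
      (abs_le.mpr ⟨by linarith, by linarith⟩) ?_ (by ring)
    · rw [abs_of_nonneg hhbar]
    · simp
  · refine isUniqueMinimizer_abs_add_abs_sub_add_sq a (-b) abs_a ?_ abs_neg_b ?_ (by ring)
    · rw [abs_of_nonneg (by linarith)]
    · rw [abs_of_nonpos (by linarith)]; ring
  · refine isUniqueMinimizer_abs_add_abs_sub_add_sq (u + b) (-b)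
      (abs_le.mpr ⟨by linarith, by linarith⟩) ?_ abs_neg_b ?_ (by ring)
    · simp
    · rw [zero_sub, abs_neg, abs_of_nonneg hhbar]; ring
  · refine isUniqueMinimizer_abs_add_abs_sub_add_sq (-a) (-b) abs_neg_a ?_ abs_neg_b ?_ (by ring)
    · rw [abs_of_nonpos (by linarith)]; ring
    · rw [abs_of_nonpos (by linarith)]; ring
end

section
/- Suppose ℏ < 0. Then the unique minimizer v* over ℝ of φ(v) = a·|v| + b·|v − ℏ| + (1/2)·(v − u)² is given by the following piecewise formula: v* = u − a − b if a + b < u; v* = 0 if −a + b ≤ u ≤ a + b; v* = u + a − b if ℏ − a + b < u < −a + b; v* = ℏ if ℏ − a − b ≤ u ≤ ℏ − a + b; and v* = u + a + b if u < ℏ − a − b. -/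
/-!
In every case the proposed `v` satisfies the optimality condition `u - v ∈ ∂g(v)` for
`g(v) = a·|v| + b·|v - hbar|`, witnessed by subgradients `t₁ ∈ ∂(a|·|)(v)` and
`t₂ ∈ ∂(b|·|)(v - hbar)` with `u - v = t₁ + t₂`. Adding the subgradient inequality to the
identity `½(w - u)² - ½(v - u)² = (v - u)(w - v) + ½(w - v)²` gives the quadratic growth
`φ v + ½(w - v)² ≤ φ w`, which yields both minimality and uniqueness.
-/

lemma isUniqueMinimizer_of_quadratic_growth {φ : ℝ → ℝ} {v : ℝ}
    (h : ∀ w, φ v + (w - v) ^ 2 / 2 ≤ φ w) : IsUniqueMinimizer φ v := by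
  refine ⟨fun w => le_trans (by nlinarith [sq_nonneg (w - v)]) (h w), fun w hw => ?_⟩
  have hsq : (w - v) ^ 2 / 2 ≤ 0 := by linarith [h w, hw v]
  nlinarith [sq_nonneg (w - v)]

lemma isUniqueMinimizer_add_half_sq_of_subgradient {g φ : ℝ → ℝ} {u v : ℝ}
    (hφ : ∀ w, φ w = g w + (1 / 2) * (w - u) ^ 2)
    (hg : ∀ w, g v + (u - v) * (w - v) ≤ g w) : IsUniqueMinimizer φ v :=
  isUniqueMinimizer_of_quadratic_growth fun w => by
    rw [hφ, hφ]
    nlinarith [hg w]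

lemma mul_abs_add_mul_sub_le {a t x : ℝ} (ht : |t| ≤ a) (htx : t * x = a * |x|) (w : ℝ) :
    a * |x| + t * (w - x) ≤ a * |w| := by
  calc a * |x| + t * (w - x) = t * w := by rw [← htx]; ring
    _ ≤ |t| * |w| := by rw [← abs_mul]; exact le_abs_self _
    _ ≤ a * |w| := mul_le_mul_of_nonneg_right ht (abs_nonneg w)

lemma isUniqueMinimizer_of_subgradients {a b hbar u v t₁ t₂ : ℝ} {φ : ℝ → ℝ}
    (hφ : ∀ v, φ v = a * |v| + b * |v - hbar| + (1 / 2) * (v - u) ^ 2)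
    (ht₁ : |t₁| ≤ a) (hvt₁ : t₁ * v = a * |v|)
    (ht₂ : |t₂| ≤ b) (hvt₂ : t₂ * (v - hbar) = b * |v - hbar|)
    (hu : u - v = t₁ + t₂) : IsUniqueMinimizer φ v := by
  refine isUniqueMinimizer_add_half_sq_of_subgradient (g := fun v => a * |v| + b * |v - hbar|)
    hφ fun w => ?_
  have h₁ := mul_abs_add_mul_sub_le ht₁ hvt₁ w
  have h₂ := mul_abs_add_mul_sub_le ht₂ hvt₂ (w - hbar)
  rw [hu]
  linarith

/-- Proposition 1 of the paper, case `hbar < 0`: the piecewise formula for the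
unique minimizer of `φ(v) = a·|v| + b·|v − hbar| + (1/2)·(v − u)²`, i.e. for the
proximal operator of the reweighted ℓ1-ℓ1 regularizer. -/
theorem prox_reweighted_l1_l1_formula_of_hbar_neg
    (a b hbar u : ℝ) (ha : 0 ≤ a) (hb : 0 ≤ b) (hhbar : hbar < 0)
    (φ : ℝ → ℝ) (hφ : ∀ v, φ v = a * |v| + b * |v - hbar| + (1 / 2) * (v - u) ^ 2) :
    (a + b < u → IsUniqueMinimizer φ (u - a - b)) ∧
    (-a + b ≤ u → u ≤ a + b → IsUniqueMinimizer φ 0) ∧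
    (hbar - a + b < u → u < -a + b → IsUniqueMinimizer φ (u + a - b)) ∧
    (hbar - a - b ≤ u → u ≤ hbar - a + b → IsUniqueMinimizer φ hbar) ∧
    (u < hbar - a - b → IsUniqueMinimizer φ (u + a + b)) := by
  have hta : |a| ≤ a := (abs_of_nonneg ha).le
  have htb : |b| ≤ b := (abs_of_nonneg hb).le
  have htna : |-a| ≤ a := by rwa [abs_neg]
  have htnb : |-b| ≤ b := by rwa [abs_neg]
  refine ⟨fun h => ?_, fun h₁ h₂ => ?_, fun h₁ h₂ => ?_, fun h₁ h₂ => ?_, fun h => ?_⟩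
  · refine isUniqueMinimizer_of_subgradients hφ hta ?_ htb ?_ (by ring) <;>
      rw [abs_of_pos (by linarith)]
  · refine isUniqueMinimizer_of_subgradients (t₁ := u - b) hφ
      (abs_le.2 ⟨by linarith, by linarith⟩) (by simp) htb ?_ (by ring)
    rw [abs_of_pos (by linarith)]
  · refine isUniqueMinimizer_of_subgradients hφ htna ?_ htb ?_ (by ring)
    · rw [abs_of_neg (by linarith)]; ring
    · rw [abs_of_pos (by linarith)]
  · refine isUniqueMinimizer_of_subgradients (t₂ := u - hbar + a) hφ htna ?_
      (abs_le.2 ⟨by linarith, by linarith⟩) (by simp) (by ring)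
    rw [abs_of_neg hhbar]; ring
  · refine isUniqueMinimizer_of_subgradients hφ htna ?_ htnb ?_ (by ring) <;>
      rw [abs_of_neg (by linarith)] <;> ring
end

section
/- Suppose ℏ < 0 and −a + b ≤ u ≤ a + b. Then v = 0 minimizes φ, i.e., φ(0) ≤ φ(v) for all v ∈ ℝ, where φ(v) = a·|v| + b·|v − ℏ| + (1/2)·(v − u)². -/
/-! The point `0` minimizes `g v + (v - u)² / 2` as soon as `u` is a subgradient of `g` at `0`,
since `(v - u)² / 2 - u² / 2 = v² / 2 - u v ≥ -u v`. For `g v = a |v| + b |v - ℏ|` with `ℏ < 0`,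
the second term is affine with slope `b` near `0`, so the subgradients of `g` at `0` are
`s + b` with `|s| ≤ a`, which fill the interval `[-a + b, a + b]`. -/

lemma le_add_half_sq_of_subgradient_zero {g : ℝ → ℝ} {u : ℝ}
    (hg : ∀ v, g 0 + u * v ≤ g v) (v : ℝ) :
    g 0 + 1 / 2 * (0 - u) ^ 2 ≤ g v + 1 / 2 * (v - u) ^ 2 := by
  nlinarith [hg v, sq_nonneg v]

lemma mul_le_mul_abs_of_abs_le {s a : ℝ} (hs : |s| ≤ a) (v : ℝ) : s * v ≤ a * |v| :=
  calc s * v ≤ |s * v| := le_abs_self _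
    _ = |s| * |v| := abs_mul s v
    _ ≤ a * |v| := mul_le_mul_of_nonneg_right hs (abs_nonneg v)

lemma mul_abs_sub_ge_of_nonpos {b c : ℝ} (hb : 0 ≤ b) (hc : c ≤ 0) (v : ℝ) :
    b * |0 - c| + b * v ≤ b * |v - c| := by
  have hvc : v - c ≤ |v - c| := le_abs_self _
  rw [zero_sub, abs_neg, abs_of_nonpos hc, ← mul_add]
  exact mul_le_mul_of_nonneg_left (by linarith) hb

theorem prox_reweighted_l1_l1_zero_of_hbar_neg_general
    (a b hbar u : ℝ) (hb : 0 ≤ b) (hhbar : hbar < 0)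
    (h1 : -a + b ≤ u) (h2 : u ≤ a + b) :
    ∀ v : ℝ,
      a * |(0 : ℝ)| + b * |(0 : ℝ) - hbar| + (1 / 2) * ((0 : ℝ) - u) ^ 2 ≤
        a * |v| + b * |v - hbar| + (1 / 2) * (v - u) ^ 2 := by
  have hs : |u - b| ≤ a := abs_le.mpr ⟨by linarith, by linarith⟩
  refine le_add_half_sq_of_subgradient_zero (g := fun v => a * |v| + b * |v - hbar|) fun v => ?_
  have habs := mul_le_mul_abs_of_abs_le hs v
  have hshift := mul_abs_sub_ge_of_nonpos hb hhbar.le v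
  simp only [abs_zero, mul_zero, zero_add]
  linarith

/-- Proposition 1 (case `hbar < 0`), claim: if `-a + b ≤ u ≤ a + b`,
then `v = 0` minimizes `φ(v) = a·|v| + b·|v − hbar| + (1/2)·(v − u)²`. -/
theorem prox_reweighted_l1_l1_zero_of_hbar_neg
    (a b hbar u : ℝ) (ha : 0 ≤ a) (hb : 0 ≤ b) (hhbar : hbar < 0)
    (h1 : -a + b ≤ u) (h2 : u ≤ a + b) :
    ∀ v : ℝ,
      a * |(0 : ℝ)| + b * |(0 : ℝ) - hbar| + (1 / 2) * ((0 : ℝ) - u) ^ 2 ≤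
        a * |v| + b * |v - hbar| + (1 / 2) * (v - u) ^ 2 :=
  prox_reweighted_l1_l1_zero_of_hbar_neg_general a b hbar u hb hhbar h1 h2
end

section
/- Suppose ℏ < 0 and ℏ − a − b ≤ u ≤ ℏ − a + b. Then v = ℏ minimizes φ, i.e., φ(ℏ) ≤ φ(v) for all v ∈ ℝ, where φ(v) = a·|v| + b·|v − ℏ| + (1/2)·(v − u)². -/
/-!
The map `v ↦ g v + (1/2)(v - u)²` is minimized at `x` as soon as `u - x` is a subgradient of `g`
at `x` (the optimality condition of the proximal operator). For `g v = a|v| + b|v - hbar|` at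
`x = hbar < 0`, the subgradients are `-a + c` with `|c| ≤ b`, and the hypotheses on `u` say exactly
that `u - hbar` is of this form.
-/

lemma add_half_sq_le_of_subgradient {g : ℝ → ℝ} {x u : ℝ}
    (hg : ∀ v, g x + (u - x) * (v - x) ≤ g v) (v : ℝ) :
    g x + (1 / 2) * (x - u) ^ 2 ≤ g v + (1 / 2) * (v - u) ^ 2 := by
  nlinarith [hg v, sq_nonneg (v - x)]

lemma abs_sub_sub_le_abs_of_nonpos {x : ℝ} (hx : x ≤ 0) (v : ℝ) : |x| - (v - x) ≤ |v| := by
  rw [abs_of_nonpos hx]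
  linarith [neg_le_abs v]

lemma mul_le_mul_abs_of_abs_le_s10 {b c : ℝ} (hc : |c| ≤ b) (w : ℝ) : c * w ≤ b * |w| :=
  calc c * w ≤ |c * w| := le_abs_self _
    _ = |c| * |w| := abs_mul c w
    _ ≤ b * |w| := mul_le_mul_of_nonneg_right hc (abs_nonneg w)

theorem prox_reweighted_l1_l1_hbar_of_hbar_neg_general
    (a b hbar u : ℝ) (ha : 0 ≤ a) (hhbar : hbar < 0)
    (h1 : hbar - a - b ≤ u) (h2 : u ≤ hbar - a + b) :
    ∀ v : ℝ,
      a * |hbar| + b * |hbar - hbar| + (1 / 2) * (hbar - u) ^ 2 ≤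
        a * |v| + b * |v - hbar| + (1 / 2) * (v - u) ^ 2 := by
  have hc : |u - hbar + a| ≤ b := abs_le.mpr ⟨by linarith, by linarith⟩
  refine add_half_sq_le_of_subgradient (g := fun v ↦ a * |v| + b * |v - hbar|) fun v ↦ ?_
  have h_abs := mul_le_mul_of_nonneg_left (abs_sub_sub_le_abs_of_nonpos hhbar.le v) ha
  have h_dev := mul_le_mul_abs_of_abs_le_s10 hc (v - hbar)
  simp only [sub_self, abs_zero, mul_zero, add_zero]
  linear_combination h_abs + h_dev

/-- Proposition 1 (case `hbar < 0`), claim: if `hbar - a - b ≤ u ≤ hbar - a + b`,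
then `v = hbar` minimizes `φ(v) = a·|v| + b·|v − hbar| + (1/2)·(v − u)²`. -/
theorem prox_reweighted_l1_l1_hbar_of_hbar_neg
    (a b hbar u : ℝ) (ha : 0 ≤ a) (hb : 0 ≤ b) (hhbar : hbar < 0)
    (h1 : hbar - a - b ≤ u) (h2 : u ≤ hbar - a + b) :
    ∀ v : ℝ,
      a * |hbar| + b * |hbar - hbar| + (1 / 2) * (hbar - u) ^ 2 ≤
        a * |v| + b * |v - hbar| + (1 / 2) * (v - u) ^ 2 :=
  prox_reweighted_l1_l1_hbar_of_hbar_neg_general a b hbar u ha hhbar h1 h2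
end
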